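/- Let the sortition instance be κ-rich with n pool members and panel size k ≥ 1, and let c ≤ κ'·n for some 0 ≤ κ' < κ. Then the internal manipulability of uniform panel selection (MaxEntropy) satisfies: for every coalition C of size c, every joint misreport, and every coalition member i ∈ C, π̃(i) − π(i) ≤ k/((κ−κ')^k · n), where π and π̃ are the selection probabilities of i under the uniform distribution over the true panel set 𝒫 and over the manipulated panel set 𝒫̃, respectively. -/

import Mathlib

/-!
Replace each member of the rich panel `P₀` by honest (non-coalition) pool members carrying the
same feature vector: quota counts depend only on how many members carry each vector, so every
such set is a panel under the misreport as well. Each vector class of `P₀` keeps at least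
`(κ - κ')n + k` honest members, which yields at least `((κ - κ')n)^k / k!` manipulated panels,
while at most `C(n-1, k-1) ≤ n^(k-1) / (k-1)!` of them contain `i`; the quotient of the two
bounds is `k / ((κ - κ')^k n)`, and `π(i) ≥ 0`.
-/

open scoped Classical

/-- A sortition instance (features `feat`, panel set `Pan`, panel size `k`) is `κ`-rich if there
is a set `Wstar` of feature-value vectors present in the pool such that every vector in `Wstar`
is shared by at least `κ·n + k` pool members, and some panel consists solely of members with
vectors in `Wstar`. -/
def IsRich {N : Type*} [Fintype N] {F : Type*} {V : F → Type*}
    (feat : N → ∀ f : F, V f) (Pan : Finset (Finset N)) (k : ℕ) (κ : ℝ) : Prop :=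
  ∃ Wstar : Set (∀ f : F, V f),
    (∀ wv ∈ Wstar, ∃ i : N, feat i = wv) ∧
    (∀ wv ∈ Wstar,
      κ * (Fintype.card N) + k ≤ ((Finset.univ.filter fun i : N => feat i = wv).card : ℝ)) ∧
    ∃ P₀ ∈ Pan, ∀ i ∈ P₀, feat i ∈ Wstar

open Finset
open scoped Nat

section Fibers

variable {N α : Type*} [DecidableEq N] [DecidableEq α]

theorem card_filter_comp_eq_of_card_fiber_eq {g : N → α} {P Q : Finset N}
    (h : ∀ w, #(Q.filter (g · = w)) = #(P.filter (g · = w))) (p : α → Prop) [DecidablePred p] :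
    #(Q.filter fun t => p (g t)) = #(P.filter fun t => p (g t)) := by
  have fiberwise : ∀ R ⊆ P ∪ Q, #(R.filter fun t => p (g t)) =
      ∑ w ∈ ((P ∪ Q).image g).filter p, #(R.filter (g · = w)) := by
    intro R hR
    rw [card_eq_sum_card_fiberwise (t := ((P ∪ Q).image g).filter p) fun x hx => ?_]
    · refine sum_congr rfl fun w hw => ?_
      rw [filter_filter]
      exact congrArg card <| filter_congr fun x _ =>
        ⟨And.right, fun hx => ⟨hx ▸ (mem_filter.1 hw).2, hx⟩⟩
    · obtain ⟨hxR, hpx⟩ := mem_filter.1 hx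
      exact mem_filter.2 ⟨mem_image_of_mem g (hR hxR), hpx⟩
  rw [fiberwise Q subset_union_right, fiberwise P subset_union_left]
  exact sum_congr rfl fun w _ => h w

theorem prod_choose_le_card_filter_powerset (g : N → α) (S : Finset N) (W : Finset α)
    (c : α → ℕ) (hc : ∀ w ∉ W, c w = 0) :
    ∏ w ∈ W, (#(S.filter (g · = w))).choose (c w) ≤
      #(S.powerset.filter fun Q => ∀ w, #(Q.filter (g · = w)) = c w) := by
  set D := W.pi fun w => (S.filter (g · = w)).powersetCard (c w)
  let glue : (∀ w ∈ W, Finset N) → Finset N :=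
    fun h => S.filter fun t => ∃ hw : g t ∈ W, t ∈ h (g t) hw
  have fiber_glue : ∀ h ∈ D, ∀ w, (glue h).filter (g · = w) =
      if hw : w ∈ W then h w hw else ∅ := by
    intro h hh w
    have hsub : ∀ hw : w ∈ W, h w hw ⊆ S.filter (g · = w) := fun hw =>
      (mem_powersetCard.1 (mem_pi.1 hh w hw)).1
    ext t
    split_ifs with hw
    · simp only [glue, mem_filter]
      refine ⟨fun ⟨⟨_, _, ht⟩, hgt⟩ => hgt ▸ ht, fun ht => ?_⟩
      obtain ⟨htS, hgt⟩ := mem_filter.1 (hsub hw ht)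
      exact ⟨⟨htS, hgt ▸ hw, by subst hgt; exact ht⟩, hgt⟩
    · simp only [glue, mem_filter, notMem_empty, iff_false]
      rintro ⟨⟨_, hgw, _⟩, rfl⟩
      exact hw hgw
  have glue_mem :
      ∀ h ∈ D, glue h ∈ S.powerset.filter fun Q => ∀ w, #(Q.filter (g · = w)) = c w := by
    intro h hh
    refine mem_filter.2 ⟨mem_powerset.2 (filter_subset _ _), fun w => ?_⟩
    rw [fiber_glue h hh w]
    split_ifs with hw
    · exact (mem_powersetCard.1 (mem_pi.1 hh w hw)).2
    · exact (hc w hw).symm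
  have glue_inj : Set.InjOn glue D := by
    intro h hh h' hh' heq
    funext w hw
    have := congrArg (·.filter (g · = w)) heq
    simpa only [fiber_glue h hh, fiber_glue h' hh', dif_pos hw] using this
  calc ∏ w ∈ W, (#(S.filter (g · = w))).choose (c w) = #D := by
        simp only [D, card_pi, card_powersetCard]
    _ ≤ _ := card_le_card_of_injOn glue glue_mem glue_inj

end Fibers

theorem pow_div_factorial_le_choose {r : ℝ} (hr : 0 ≤ r) {m c : ℕ} (h : r + c ≤ m) :
    r ^ c / c ! ≤ m.choose c := by
  have hcm : c ≤ m := by exact_mod_cast (le_add_of_nonneg_left hr).trans h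
  refine le_trans ?_ (Nat.pow_le_choose c m)
  gcongr
  rw [Nat.cast_sub (by omega)]
  push_cast
  linarith

theorem pow_sum_div_factorial_le_prod_choose {ι : Type*} (W : Finset ι) (m c : ι → ℕ)
    {r : ℝ} (hr : 0 ≤ r) (h : ∀ w ∈ W, r + c w ≤ m w) :
    r ^ (∑ w ∈ W, c w) / (∑ w ∈ W, c w)! ≤ ∏ w ∈ W, ((m w).choose (c w) : ℝ) :=
  calc r ^ (∑ w ∈ W, c w) / (∑ w ∈ W, c w)!
      ≤ r ^ (∑ w ∈ W, c w) / ∏ w ∈ W, ((c w)! : ℝ) := by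
        gcongr
        exact_mod_cast
          Nat.le_of_dvd (Nat.factorial_pos _) (Nat.prod_factorial_dvd_factorial_sum W c)
    _ = ∏ w ∈ W, r ^ c w / (c w)! := by rw [prod_div_distrib, prod_pow_eq_pow_sum]
    _ ≤ ∏ w ∈ W, ((m w).choose (c w) : ℝ) :=
        prod_le_prod (fun w _ => by positivity) fun w hw =>
          pow_div_factorial_le_choose hr (h w hw)

theorem card_filter_mem_le_choose {N : Type*} [Fintype N] [DecidableEq N]
    {𝒬 : Finset (Finset N)} {k : ℕ} (h𝒬 : ∀ P ∈ 𝒬, #P = k) (i : N) :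
    #(𝒬.filter (i ∈ ·)) ≤ (Fintype.card N - 1).choose (k - 1) :=
  calc #(𝒬.filter (i ∈ ·)) ≤ #(((univ.erase i).powersetCard (k - 1)).image (insert i)) := by
        refine card_le_card fun P hP => ?_
        obtain ⟨hP𝒬, hiP⟩ := mem_filter.1 hP
        have hPi : P.erase i ∈ (univ.erase i).powersetCard (k - 1) := by
          rw [mem_powersetCard, card_erase_of_mem hiP, h𝒬 P hP𝒬]
          exact ⟨erase_subset_erase i (subset_univ P), rfl⟩
        exact mem_image.2 ⟨P.erase i, hPi, insert_erase hiP⟩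
    _ ≤ #((univ.erase i).powersetCard (k - 1)) := card_image_le
    _ = (Fintype.card N - 1).choose (k - 1) := by
        rw [card_powersetCard, card_erase_of_mem (mem_univ i), Finset.card_univ]

theorem choose_pred_div_pow_div_factorial_le {n k : ℕ} (hn : 0 < n) (hk : 1 ≤ k) {δ : ℝ}
    (hδ : 0 < δ) :
    ((n - 1).choose (k - 1) : ℝ) / ((δ * n) ^ k / k !) ≤ k / (δ ^ k * n) := by
  obtain ⟨j, rfl⟩ : ∃ j, k = j + 1 := ⟨k - 1, by omega⟩
  have hchoose : ((n - 1).choose j : ℝ) ≤ (n : ℝ) ^ j / j ! :=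
    (Nat.choose_le_pow_div j (n - 1)).trans (by gcongr; exact_mod_cast Nat.sub_le n 1)
  have hn' : (0 : ℝ) < n := by exact_mod_cast hn
  rw [Nat.add_sub_cancel, div_le_div_iff₀ (by positivity) (by positivity)]
  calc ((n - 1).choose j : ℝ) * (δ ^ (j + 1) * n)
      ≤ (n : ℝ) ^ j / j ! * (δ ^ (j + 1) * n) := by gcongr
    _ = (j + 1 : ℕ) * ((δ * n) ^ (j + 1) / (j + 1)!) := by
        rw [Nat.factorial_succ]
        push_cast
        field_simp
        ring

section Sortition

variable {N : Type*} [Fintype N] {F : Type*} {V : F → Type*}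

noncomputable def panels (feat : N → ∀ f : F, V f) (k : ℕ)
    (ℓ u : ((f : F) × V f) → ℕ) : Finset (Finset N) :=
  univ.filter fun P : Finset N =>
    P.card = k ∧ ∀ (f : F) (v : V f),
      ℓ ⟨f, v⟩ ≤ (P.filter fun t => feat t f = v).card ∧
      (P.filter fun t => feat t f = v).card ≤ u ⟨f, v⟩

variable [DecidableEq N] {feat feat' : N → ∀ f : F, V f} {k : ℕ}
  {ℓ u : ((f : F) × V f) → ℕ}

theorem mem_panels_of_card_fiber_eq {P Q : Finset N} (hP : P ∈ panels feat k ℓ u)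
    (hQ : ∀ t ∈ Q, feat' t = feat t)
    (hfiber : ∀ w, #(Q.filter (feat · = w)) = #(P.filter (feat · = w))) :
    Q ∈ panels feat' k ℓ u := by
  have hcount : ∀ (f : F) (v : V f),
      #(Q.filter fun t => feat' t f = v) = #(P.filter fun t => feat t f = v) := fun f v => by
    rw [filter_congr fun t ht => by rw [hQ t ht]]
    exact card_filter_comp_eq_of_card_fiber_eq hfiber (fun w => w f = v)
  obtain ⟨-, hPk, hPquota⟩ := mem_filter.1 hP
  refine mem_filter.2 ⟨mem_univ Q, ?_, fun f v => hcount f v ▸ hPquota f v⟩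
  simpa [hPk] using card_filter_comp_eq_of_card_fiber_eq hfiber (fun _ => True)

theorem prod_choose_le_card_panels {P : Finset N} (hP : P ∈ panels feat k ℓ u) (S : Finset N)
    (hS : ∀ t ∈ S, feat' t = feat t) :
    ∏ w ∈ P.image feat, (#(S.filter (feat · = w))).choose #(P.filter (feat · = w)) ≤
      #(panels feat' k ℓ u) := by
  refine (prod_choose_le_card_filter_powerset feat S _ _ fun w hw => ?_).trans
    (card_le_card fun Q hQ => ?_)
  · exact card_eq_zero.2 <| filter_eq_empty_iff.2 fun t ht hft =>
      hw (hft ▸ mem_image_of_mem feat ht)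
  · obtain ⟨hQS, hQfiber⟩ := mem_filter.1 hQ
    exact mem_panels_of_card_fiber_eq hP (fun t ht => hS t (mem_powerset.1 hQS ht)) hQfiber

theorem pow_div_factorial_le_card_panels_of_isRich {κ κ' : ℝ} (hκ' : κ' ≤ κ)
    (hrich : IsRich feat (panels feat k ℓ u) k κ) {C : Finset N}
    (hC : (#C : ℝ) ≤ κ' * Fintype.card N) (hoff : ∀ i ∉ C, feat' i = feat i) :
    ((κ - κ') * Fintype.card N) ^ k / k ! ≤ #(panels feat' k ℓ u) := by
  obtain ⟨Wstar, -, hWbig, P₀, hP₀, hP₀W⟩ := hrich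
  have hP₀k : #P₀ = k := (mem_filter.1 hP₀).2.1
  have hfiber : ∀ w ∈ P₀.image feat,
      (κ - κ') * Fintype.card N + #(P₀.filter (feat · = w)) ≤
        #(Cᶜ.filter (feat · = w)) := by
    intro w hw
    obtain ⟨t, ht, rfl⟩ := mem_image.1 hw
    have hhonest :
        (#(univ.filter (feat · = feat t)) : ℝ) ≤ #(Cᶜ.filter (feat · = feat t)) + #C := by
      exact_mod_cast (card_le_card fun x hx => by by_cases hxC : x ∈ C <;> simp_all).trans
        (card_union_le _ _)
    have hcount : (#(P₀.filter (feat · = feat t)) : ℝ) ≤ k := by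
      exact_mod_cast hP₀k ▸ card_le_card (filter_subset _ _)
    linarith [hWbig _ (hP₀W t ht)]
  calc ((κ - κ') * Fintype.card N) ^ k / k !
      = ((κ - κ') * Fintype.card N) ^ (∑ w ∈ P₀.image feat, #(P₀.filter (feat · = w))) /
          (∑ w ∈ P₀.image feat, #(P₀.filter (feat · = w)))! := by
        rw [← card_eq_sum_card_image, hP₀k]
    _ ≤ ∏ w ∈ P₀.image feat,
          ((#(Cᶜ.filter (feat · = w))).choose #(P₀.filter (feat · = w)) : ℝ) :=
        pow_sum_div_factorial_le_prod_choose _ _ _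
          (mul_nonneg (sub_nonneg.2 hκ') (Nat.cast_nonneg _)) hfiber
    _ ≤ #(panels feat' k ℓ u) := by
        exact_mod_cast prod_choose_le_card_panels hP₀ Cᶜ fun t ht => hoff t (mem_compl.1 ht)

end Sortition

theorem internal_manipulability_bound_general
    {N : Type*} [Fintype N] [DecidableEq N]
    {F : Type*} {V : F → Type*}
    (feat : N → ∀ f : F, V f) (k : ℕ) (hk : 1 ≤ k)
    (ℓ u : ((f : F) × V f) → ℕ)
    (Pan : Finset (Finset N))
    (hPan : Pan = Finset.univ.filter fun P : Finset N =>
      P.card = k ∧ ∀ (f : F) (v : V f),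
        ℓ ⟨f, v⟩ ≤ (P.filter fun t => feat t f = v).card ∧
        (P.filter fun t => feat t f = v).card ≤ u ⟨f, v⟩)
    (κ κ' : ℝ) (hκ' : κ' < κ)
    (hrich : IsRich feat Pan k κ) :
    ∀ (feat' : N → ∀ f : F, V f) (C : Finset N),
      (C.card : ℝ) ≤ κ' * Fintype.card N →
      (∀ i ∉ C, feat' i = feat i) →
      ∀ Pant : Finset (Finset N),
        Pant = (Finset.univ.filter fun P : Finset N =>
          P.card = k ∧ ∀ (f : F) (v : V f),
            ℓ ⟨f, v⟩ ≤ (P.filter fun t => feat' t f = v).card ∧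
            (P.filter fun t => feat' t f = v).card ≤ u ⟨f, v⟩) →
        ∀ i ∈ C,
          ((Pant.filter fun P => i ∈ P).card : ℝ) / Pant.card -
              ((Pan.filter fun P => i ∈ P).card : ℝ) / Pan.card ≤
            k / ((κ - κ') ^ k * Fintype.card N) := by
  intro feat' C hC hoff Pant hPant i _
  obtain rfl : Pan = panels feat k ℓ u := hPan
  obtain rfl : Pant = panels feat' k ℓ u := hPant
  have hn : 0 < Fintype.card N := Fintype.card_pos_iff.2 ⟨i⟩
  have hlower := pow_div_factorial_le_card_panels_of_isRich hκ'.le hrich hC hoff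
  have hupper :
      #((panels feat' k ℓ u).filter (i ∈ ·)) ≤ (Fintype.card N - 1).choose (k - 1) :=
    card_filter_mem_le_choose (fun P hP => (mem_filter.1 hP).2.1) i
  have hδ : 0 < κ - κ' := sub_pos.2 hκ'
  calc _ ≤ (#((panels feat' k ℓ u).filter (i ∈ ·)) : ℝ) / #(panels feat' k ℓ u) :=
        sub_le_self _ (by positivity)
    _ ≤ ((Fintype.card N - 1).choose (k - 1) : ℝ) /
          (((κ - κ') * Fintype.card N) ^ k / k !) := by
        gcongr
    _ ≤ k / ((κ - κ') ^ k * Fintype.card N) := choose_pred_div_pow_div_factorial_le hn hk hδ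

/-- Internal manipulability of uniform (MaxEntropy) panel selection: in a
`κ`-rich instance with `n` pool members and panel size `k ≥ 1`, for every coalition `C` of size
`c ≤ κ'·n` (with `0 ≤ κ' < κ`), every joint misreport `feat'` (agreeing with `feat` off `C`),
and every coalition member `i ∈ C`, the gain in selection probability under the uniform
distributions over the manipulated and true panel sets is at most `k/((κ−κ')^k · n)`. -/
theorem internal_manipulability_bound
    {N : Type*} [Fintype N] [DecidableEq N]
    {F : Type*} {V : F → Type*}
    (feat : N → ∀ f : F, V f) (k : ℕ) (hk : 1 ≤ k)
    (ℓ u : ((f : F) × V f) → ℕ)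
    (Pan : Finset (Finset N))
    (hPan : Pan = Finset.univ.filter fun P : Finset N =>
      P.card = k ∧ ∀ (f : F) (v : V f),
        ℓ ⟨f, v⟩ ≤ (P.filter fun t => feat t f = v).card ∧
        (P.filter fun t => feat t f = v).card ≤ u ⟨f, v⟩)
    (κ κ' : ℝ) (hκ : 0 < κ) (hκ'0 : 0 ≤ κ') (hκ' : κ' < κ)
    (hrich : IsRich feat Pan k κ) :
    ∀ (feat' : N → ∀ f : F, V f) (C : Finset N),
      (C.card : ℝ) ≤ κ' * Fintype.card N →
      (∀ i ∉ C, feat' i = feat i) →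
      ∀ Pant : Finset (Finset N),
        Pant = (Finset.univ.filter fun P : Finset N =>
          P.card = k ∧ ∀ (f : F) (v : V f),
            ℓ ⟨f, v⟩ ≤ (P.filter fun t => feat' t f = v).card ∧
            (P.filter fun t => feat' t f = v).card ≤ u ⟨f, v⟩) →
        ∀ i ∈ C,
          ((Pant.filter fun P => i ∈ P).card : ℝ) / Pant.card -
              ((Pan.filter fun P => i ∈ P).card : ℝ) / Pan.card ≤
            k / ((κ - κ') ^ k * Fintype.card N) :=
  internal_manipulability_bound_general feat k hk ℓ u Pan hPan κ κ' hκ' hrich
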